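/- arXiv:1503.02375 — 5 statements merged into one kernel-verified Lean document; each statement's English description precedes it below -/
import Mathlib

section
/- Let X be a stochastic process on a set Ω indexed by a time set T (either ℕ or [0,∞)) with values in a measurable space (E, ℰ), and let S be a stopping time of the natural filtration F^X of X. If A ∈ F^X_S, then for all ω, ω' ∈ Ω: if X_t(ω) = X_t(ω') for every t ∈ T with t ≤ S(ω) ∧ S(ω'), then S(ω) = S(ω'), the stopped paths X^S(ω) and X^S(ω') coincide, and the indicator 1_A takes the same value at ω and ω'. -/
open MeasureTheory Set

variable {Ω E T : Type*}

/-- The natural filtration of a process `X : T → Ω → E`. -/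
def natFilt [LinearOrder T] [mE : MeasurableSpace E] (X : T → Ω → E) (t : T) :
    MeasurableSpace Ω :=
  ⨆ s, ⨆ _ : s ≤ t, mE.comap (X s)

/-- The process `X` stopped at the random time `S : Ω → T ∪ {∞}`. -/
def stopped [LinearOrder T] (X : T → Ω → E) (S : Ω → WithTop T) (t : T) (ω : Ω) : E :=
  X (min t ((S ω).untopD t)) ω

/-! The idea: the sets that do not separate `ω` from `ω'` form a σ-algebra. It contains every
generator `{X s ∈ B}` with `s ≤ t` once the paths agree up to `t`, hence all of `F^X_t`.
Applied to `{S ≤ S ω}` this shows `S ω' ≤ S ω` when `S ω ≤ S ω'` (Galmarino's test), and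
applied to `A ∩ {S ≤ S ω}` (or to `A` itself if `S ω = ∞`) it gives the claim on `1_A`. -/

def nonSeparatingAlg (ω ω' : Ω) : MeasurableSpace Ω where
  MeasurableSet' A := ω ∈ A ↔ ω' ∈ A
  measurableSet_empty := Iff.rfl
  measurableSet_compl _ hA := not_congr hA
  measurableSet_iUnion f hf := by simp only [mem_iUnion]; exact exists_congr hf

section NaturalFiltration

variable [LinearOrder T] [MeasurableSpace E] {X : T → Ω → E} {ω ω' : Ω} {B : Set Ω}

lemma natFilt_le_nonSeparatingAlg {t : T} (h : ∀ s ≤ t, X s ω = X s ω') :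
    natFilt X t ≤ nonSeparatingAlg ω ω' := by
  refine iSup_le fun s => iSup_le fun hs _ ⟨C, _, hC⟩ => ?_
  subst hC
  show X s ω ∈ C ↔ X s ω' ∈ C
  rw [h s hs]

lemma mem_iff_of_measurableSet_natFilt {t : T} (h : ∀ s ≤ t, X s ω = X s ω')
    (hB : MeasurableSet[natFilt X t] B) : ω ∈ B ↔ ω' ∈ B :=
  natFilt_le_nonSeparatingAlg h B hB

lemma mem_iff_of_measurableSet_iSup_natFilt (h : ∀ s, X s ω = X s ω')
    (hB : MeasurableSet[⨆ t, natFilt X t] B) : ω ∈ B ↔ ω' ∈ B :=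
  iSup_le (fun _ => natFilt_le_nonSeparatingAlg fun s _ => h s) B hB

variable {S : Ω → WithTop T}

lemma not_lt_of_agree_of_isStoppingTime
    (hS : ∀ t : T, MeasurableSet[natFilt X t] {ω | S ω ≤ (t : WithTop T)})
    (h : ∀ t : T, (t : WithTop T) ≤ S ω ⊓ S ω' → X t ω = X t ω') : ¬ S ω < S ω' := by
  intro hlt
  obtain ⟨t₀, ht₀⟩ := WithTop.ne_top_iff_exists.1 hlt.ne_top
  have hinf : S ω ⊓ S ω' = t₀ := by rw [inf_eq_left.2 hlt.le, ← ht₀]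
  have hagree : ∀ s ≤ t₀, X s ω = X s ω' := fun s hs =>
    h s (hinf ▸ WithTop.coe_le_coe.2 hs)
  have hω' : S ω' ≤ t₀ := (mem_iff_of_measurableSet_natFilt hagree (hS t₀)).1 ht₀.ge
  exact (ht₀ ▸ hlt).not_ge hω'

lemma eq_of_agree_of_isStoppingTime
    (hS : ∀ t : T, MeasurableSet[natFilt X t] {ω | S ω ≤ (t : WithTop T)})
    (h : ∀ t : T, (t : WithTop T) ≤ S ω ⊓ S ω' → X t ω = X t ω') : S ω = S ω' := by
  have h' : ∀ t : T, (t : WithTop T) ≤ S ω' ⊓ S ω → X t ω' = X t ω := fun t ht =>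
    (h t (inf_comm (S ω) (S ω') ▸ ht)).symm
  exact le_antisymm (not_lt.1 (not_lt_of_agree_of_isStoppingTime hS h'))
    (not_lt.1 (not_lt_of_agree_of_isStoppingTime hS h))

end NaturalFiltration

lemma WithTop.coe_min_untopD_le [LinearOrder T] (t : T) (s : WithTop T) :
    ((min t (s.untopD t) : T) : WithTop T) ≤ s := by
  cases s with
  | top => exact le_top
  | coe s => exact WithTop.coe_le_coe.2 (min_le_right t s)

theorem stmt_0_general [LinearOrder T] [MeasurableSpace E]
    (X : T → Ω → E) (S : Ω → WithTop T)
    (hS : ∀ t : T, MeasurableSet[natFilt X t] {ω | S ω ≤ (t : WithTop T)})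
    (A : Set Ω)
    (hAinf : MeasurableSet[⨆ t, natFilt X t] A)
    (hA : ∀ t : T, MeasurableSet[natFilt X t] (A ∩ {ω | S ω ≤ (t : WithTop T)}))
    (ω ω' : Ω)
    (h : ∀ t : T, (t : WithTop T) ≤ S ω ⊓ S ω' → X t ω = X t ω') :
    S ω = S ω' ∧ (∀ t : T, stopped X S t ω = stopped X S t ω') ∧ (ω ∈ A ↔ ω' ∈ A) := by
  have hSS := eq_of_agree_of_isStoppingTime hS h
  have hagree : ∀ t : T, (t : WithTop T) ≤ S ω → X t ω = X t ω' := fun t ht =>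
    h t (by rwa [← hSS, inf_idem])
  refine ⟨hSS, fun t => ?_, ?_⟩
  · rw [stopped, stopped, ← hSS]
    exact hagree _ (WithTop.coe_min_untopD_le t (S ω))
  · cases hω : S ω with
    | top =>
      exact mem_iff_of_measurableSet_iSup_natFilt (fun s => hagree s (hω ▸ le_top)) hAinf
    | coe t₀ =>
      have hA' := mem_iff_of_measurableSet_natFilt
        (fun s hs => hagree s (hω ▸ WithTop.coe_le_coe.2 hs)) (hA t₀)
      exact ⟨fun hmem => (hA'.1 ⟨hmem, hω.le⟩).1,
        fun hmem => (hA'.2 ⟨hmem, (hSS ▸ hω.le : S ω' ≤ t₀)⟩).1⟩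

/-- **Key Lemma.** If `X` is a process with time set `T` (`ℕ` or `[0,∞)`), `S` a stopping time
of its natural filtration, and `A ∈ F^X_S`, then whenever the paths of `X` at `ω` and `ω'`
agree up to time `S ω ⊓ S ω'`, we have `S ω = S ω'`, the stopped paths agree, and `1_A`
takes the same value at `ω` and `ω'`. -/
theorem stmt_0 [LinearOrder T] [MeasurableSpace E]
    (hT : Nonempty (T ≃o ℕ) ∨ Nonempty (T ≃o NNReal))
    (X : T → Ω → E) (S : Ω → WithTop T)
    (hS : ∀ t : T, MeasurableSet[natFilt X t] {ω | S ω ≤ (t : WithTop T)})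
    (A : Set Ω)
    (hAinf : MeasurableSet[⨆ t, natFilt X t] A)
    (hA : ∀ t : T, MeasurableSet[natFilt X t] (A ∩ {ω | S ω ≤ (t : WithTop T)}))
    (ω ω' : Ω)
    (h : ∀ t : T, (t : WithTop T) ≤ S ω ⊓ S ω' → X t ω = X t ω') :
    S ω = S ω' ∧ (∀ t : T, stopped X S t ω = stopped X S t ω') ∧ (ω ∈ A ↔ ω' ∈ A) :=
  stmt_0_general X S hS A hAinf hA ω ω' h
end

section
/- Let X and Y be two processes on Ω with time set T and values in (E, ℰ), let S be a stopping time of both natural filtrations F^X and F^Y, and suppose X^S = Y^S and Im X = Im Y (as subsets of E^T). Then F^X_S = F^Y_S. -/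
open MeasureTheory Set

variable {Ω E T : Type*}

/-! A set in `F^X_t` is determined by the path of `X` on `[0, t]`. If the `X`-path of `ω'` is the
`Y`-path of `ω`, then the `X`-paths of `ω'` and `ω` agree up to time `S ω`; hence the stopping time
`S` takes the same value at `ω'` and `ω`, and every `A ∈ F^X_S` contains both or neither. As every
`Y`-path is an `X`-path, any description of `A` (or of `A ∩ {S ≤ t}`) through the `X`-path then
describes it equally through the `Y`-path. -/

open Function

lemma measurableSet_comap_of_range_subset {α β : Type*} {m : MeasurableSpace β} {f g : α → β}
    (hgf : range g ⊆ range f) {U : Set α} (hU : MeasurableSet[m.comap f] U)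
    (hinv : ∀ a a', f a' = g a → (a' ∈ U ↔ a ∈ U)) : MeasurableSet[m.comap g] U := by
  obtain ⟨B, hB, rfl⟩ := hU
  refine ⟨B, hB, Set.ext fun a => ?_⟩
  obtain ⟨a', ha'⟩ := hgf (mem_range_self a)
  rw [← hinv a a' ha', mem_preimage, mem_preimage, ha']

lemma WithTop.eq_of_forall_le_coe_iff_of_coe_le {T : Type*} [LinearOrder T] {a b : WithTop T}
    (h : ∀ u : T, (u : WithTop T) ≤ b → (a ≤ u ↔ b ≤ u)) : a = b := by
  rcases lt_trichotomy a b with hab | hab | hab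
  · lift a to T using hab.ne_top
    exact absurd ((h a hab.le).1 le_rfl) hab.not_ge
  · exact hab
  · lift b to T using hab.ne_top
    exact absurd ((h b le_rfl).2 le_rfl) hab.not_ge

section NatFilt

variable [LinearOrder T] [MeasurableSpace E]

lemma natFilt_eq_comap_swap (X : T → Ω → E) (t : T) :
    natFilt X t = (natFilt (eval (β := fun _ : T => E)) t).comap (swap X) := by
  simp only [natFilt, MeasurableSpace.comap_iSup, MeasurableSpace.comap_comp]
  rfl

lemma iSup_natFilt_eq_comap_swap (X : T → Ω → E) :
    ⨆ t, natFilt X t = (⨆ t, natFilt (eval (β := fun _ : T => E)) t).comap (swap X) := by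
  simp only [MeasurableSpace.comap_iSup, ← natFilt_eq_comap_swap]

lemma natFilt_le_comap_domRestrict (X : T → Ω → E) (t : T) :
    natFilt X t ≤ (⊤ : MeasurableSpace (Iic t → E)).comap fun ω => (Iic t).domRestrict (swap X ω) :=
  iSup₂_le fun s hs => by
    have hXs : X s = (fun x : Iic t → E => x ⟨s, hs⟩) ∘ fun ω => (Iic t).domRestrict (swap X ω) :=
      rfl
    rw [hXs, ← MeasurableSpace.comap_comp]
    exact MeasurableSpace.comap_mono le_top

lemma mem_iff_of_eqOn_swap {X : T → Ω → E} {t : T} {U : Set Ω} {ω ω' : Ω}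
    (hU : MeasurableSet[natFilt X t] U) (h : EqOn (swap X ω) (swap X ω') (Iic t)) :
    ω ∈ U ↔ ω' ∈ U := by
  obtain ⟨B, -, rfl⟩ := natFilt_le_comap_domRestrict X t U hU
  simp only [mem_preimage, domRestrict_eq_domRestrict_iff.2 h]

/-- The σ-algebra `F^X_S`, as a family of sets. -/
def natFiltAt (X : T → Ω → E) (S : Ω → WithTop T) : Set (Set Ω) :=
  {A | MeasurableSet[⨆ t, natFilt X t] A ∧
    ∀ t : T, MeasurableSet[natFilt X t] (A ∩ {ω | S ω ≤ (t : WithTop T)})}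

end NatFilt

section Stopped

variable [LinearOrder T] {X Y : T → Ω → E} {S : Ω → WithTop T} {ω ω' : Ω}

lemma stopped_of_coe_le {t : T} (h : (t : WithTop T) ≤ S ω) : stopped X S t ω = X t ω := by
  cases hS : S ω with
  | top => simp [stopped, hS]
  | coe r => simp [stopped, hS, WithTop.coe_le_coe.1 (hS ▸ h)]

lemma apply_eq_of_stopped_eq (hXY : ∀ t ω, stopped X S t ω = stopped Y S t ω) {t : T}
    (h : (t : WithTop T) ≤ S ω) : X t ω = Y t ω :=
  (stopped_of_coe_le h).symm.trans ((hXY t ω).trans (stopped_of_coe_le h))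

lemma eqOn_swap_of_stopped_eq (hXY : ∀ t ω, stopped X S t ω = stopped Y S t ω)
    (h : swap X ω' = swap Y ω) {u : T} (hu : (u : WithTop T) ≤ S ω) :
    EqOn (swap X ω) (swap X ω') (Iic u) := fun s hs => by
  rw [h, swap, swap, apply_eq_of_stopped_eq hXY ((WithTop.coe_le_coe.2 hs).trans hu)]

variable [MeasurableSpace E]

lemma eq_of_swap_eq (hSX : ∀ t : T, MeasurableSet[natFilt X t] {ω | S ω ≤ (t : WithTop T)})
    (hXY : ∀ t ω, stopped X S t ω = stopped Y S t ω) (h : swap X ω' = swap Y ω) :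
    S ω' = S ω :=
  WithTop.eq_of_forall_le_coe_iff_of_coe_le fun u hu =>
    (mem_iff_of_eqOn_swap (hSX u) (eqOn_swap_of_stopped_eq hXY h hu)).symm

lemma mem_iff_of_swap_eq (hSX : ∀ t : T, MeasurableSet[natFilt X t] {ω | S ω ≤ (t : WithTop T)})
    (hXY : ∀ t ω, stopped X S t ω = stopped Y S t ω) {A : Set Ω} (hA : A ∈ natFiltAt X S)
    (h : swap X ω' = swap Y ω) : ω' ∈ A ↔ ω ∈ A := by
  cases hS : S ω with
  | top =>
    have hXω : swap X ω = swap Y ω :=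
      funext fun s => apply_eq_of_stopped_eq hXY (hS ▸ le_top)
    obtain ⟨B, -, rfl⟩ := (iSup_natFilt_eq_comap_swap X).le A hA.1
    simp only [mem_preimage, h, hXω]
  | coe r =>
    have hagree := eqOn_swap_of_stopped_eq hXY h hS.ge
    have hω : ω ∈ {ω | S ω ≤ (r : WithTop T)} := hS.le
    have hω' := (mem_iff_of_eqOn_swap (hSX r) hagree).1 hω
    have hA' := mem_iff_of_eqOn_swap (hA.2 r) hagree
    rw [mem_inter_iff, mem_inter_iff, and_iff_left hω, and_iff_left hω'] at hA'
    exact hA'.symm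

lemma natFiltAt_subset (hSX : ∀ t : T, MeasurableSet[natFilt X t] {ω | S ω ≤ (t : WithTop T)})
    (hXY : ∀ t ω, stopped X S t ω = stopped Y S t ω) (hIm : range (swap Y) ⊆ range (swap X)) :
    natFiltAt X S ⊆ natFiltAt Y S := by
  intro A hA
  refine ⟨?_, fun t => ?_⟩
  · have hA_top := hA.1
    rw [iSup_natFilt_eq_comap_swap] at hA_top ⊢
    exact measurableSet_comap_of_range_subset hIm hA_top fun ω ω' h =>
      mem_iff_of_swap_eq hSX hXY hA h
  · have hA_t := hA.2 t
    rw [natFilt_eq_comap_swap] at hA_t ⊢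
    refine measurableSet_comap_of_range_subset hIm hA_t fun ω ω' h => ?_
    simp only [mem_inter_iff, mem_ofPred_eq, mem_iff_of_swap_eq hSX hXY hA h,
      eq_of_swap_eq hSX hXY h]

end Stopped

theorem stmt_5_general [LinearOrder T] [MeasurableSpace E]
    (X Y : T → Ω → E) (S : Ω → WithTop T)
    (hSX : ∀ t : T, MeasurableSet[natFilt X t] {ω | S ω ≤ (t : WithTop T)})
    (hSY : ∀ t : T, MeasurableSet[natFilt Y t] {ω | S ω ≤ (t : WithTop T)})
    (hXY : ∀ (t : T) (ω : Ω), stopped X S t ω = stopped Y S t ω)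
    (hIm : Set.range (fun ω (t : T) => X t ω) = Set.range (fun ω (t : T) => Y t ω)) :
    ∀ A : Set Ω,
      (MeasurableSet[⨆ t, natFilt X t] A ∧
          ∀ t : T, MeasurableSet[natFilt X t] (A ∩ {ω | S ω ≤ (t : WithTop T)})) ↔
        (MeasurableSet[⨆ t, natFilt Y t] A ∧
          ∀ t : T, MeasurableSet[natFilt Y t] (A ∩ {ω | S ω ≤ (t : WithTop T)})) := fun _ =>
  ⟨fun hA => natFiltAt_subset hSX hXY hIm.ge hA,
    fun hA => natFiltAt_subset hSY (fun t ω => (hXY t ω).symm) hIm.le hA⟩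

/-- **Observational consistency.** If `S` is a stopping time of the natural filtrations of
both `X` and `Y`, the stopped processes agree, and `Im X = Im Y` (as subsets of `E^T`),
then `F^X_S = F^Y_S`. -/
theorem stmt_5 [LinearOrder T] [MeasurableSpace E]
    (hT : Nonempty (T ≃o ℕ) ∨ Nonempty (T ≃o NNReal))
    (X Y : T → Ω → E) (S : Ω → WithTop T)
    (hSX : ∀ t : T, MeasurableSet[natFilt X t] {ω | S ω ≤ (t : WithTop T)})
    (hSY : ∀ t : T, MeasurableSet[natFilt Y t] {ω | S ω ≤ (t : WithTop T)})
    (hXY : ∀ (t : T) (ω : Ω), stopped X S t ω = stopped Y S t ω)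
    (hIm : Set.range (fun ω (t : T) => X t ω) = Set.range (fun ω (t : T) => Y t ω)) :
    ∀ A : Set Ω,
      (MeasurableSet[⨆ t, natFilt X t] A ∧
          ∀ t : T, MeasurableSet[natFilt X t] (A ∩ {ω | S ω ≤ (t : WithTop T)})) ↔
        (MeasurableSet[⨆ t, natFilt Y t] A ∧
          ∀ t : T, MeasurableSet[natFilt Y t] (A ∩ {ω | S ω ≤ (t : WithTop T)})) :=
  stmt_5_general X Y S hSX hSY hXY hIm
end

section
/- Let T = ℕ, let G be a filtration on Ω, let P be a complete probability measure whose domain includes G_∞, and let S be a stopping time of the completed filtration Ḡ^P (where Ḡ^P_n = G_n ∨ N, N the P-null sets). Then there exists a stopping time S' of G with S = S' P-almost surely. -/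
/-!
Each set `{S ≤ n}` lies in `G n ∨ N`, so it differs from some `B n ∈ G n` by a null set. The
accumulated sets `C n = B 0 ∪ ⋯ ∪ B n` are still in `G n`, still a.e. equal to `{S ≤ n}` (whose
sequence is already increasing), and form an increasing sequence; the first index `n` with
`ω ∈ C n` is therefore a `G`-stopping time with `{S' ≤ n} = C n`. Countably many null sets are
discarded, so `S = S'` almost surely.
-/

open MeasureTheory Set

variable {Ω : Type*}

/-- The completion of a (discrete-time) filtration `G` by the null sets of `P`. -/
def complFilt [MeasurableSpace Ω] (G : ℕ → MeasurableSpace Ω) (P : Measure Ω) :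
    ℕ → MeasurableSpace Ω :=
  fun n => G n ⊔ MeasurableSpace.generateFrom {A : Set Ω | P A = 0}

lemma complFilt_le_eventuallyMeasurableSpace [MeasurableSpace Ω] (G : ℕ → MeasurableSpace Ω)
    (P : Measure Ω) (n : ℕ) : complFilt G P n ≤ eventuallyMeasurableSpace (G n) (ae P) :=
  sup_le (fun s hs => ⟨s, hs, .rfl⟩)
    (MeasurableSpace.generateFrom_le fun _ hs =>
      ⟨∅, @MeasurableSet.empty _ (G n), ae_eq_empty.mpr hs⟩)

lemma exists_measurableSet_ae_eq_of_measurableSet_complFilt [MeasurableSpace Ω]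
    {G : ℕ → MeasurableSpace Ω} {P : Measure Ω} {n : ℕ} {A : Set Ω}
    (hA : MeasurableSet[complFilt G P n] A) : ∃ B, MeasurableSet[G n] B ∧ A =ᵐ[P] B :=
  complFilt_le_eventuallyMeasurableSpace G P n A hA

noncomputable def firstEntry (C : ℕ → Set Ω) (ω : Ω) : ℕ∞ :=
  ⨅ (n : ℕ) (_ : ω ∈ C n), (n : ℕ∞)

lemma firstEntry_le_coe_iff {C : ℕ → Set Ω} (hC : Monotone C) (ω : Ω) (n : ℕ) :
    firstEntry C ω ≤ n ↔ ω ∈ C n := by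
  refine ⟨fun h => ?_, fun h => iInf₂_le n h⟩
  by_contra hn
  have hlt : ((n + 1 : ℕ) : ℕ∞) ≤ firstEntry C ω := le_iInf₂ fun k hk => by
    exact_mod_cast Nat.succ_le_of_lt (lt_of_not_ge fun hkn => hn (hC hkn hk))
  exact absurd (hlt.trans h) (by exact_mod_cast n.not_succ_le_self)

theorem exists_ae_eq_of_forall_exists_measurableSet_ae_eq [MeasurableSpace Ω]
    {G : ℕ → MeasurableSpace Ω} (hmono : Monotone G) {P : Measure Ω} {S : Ω → ℕ∞}
    (hS : ∀ n : ℕ, ∃ B, MeasurableSet[G n] B ∧ {ω | S ω ≤ n} =ᵐ[P] B) :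
    ∃ S' : Ω → ℕ∞, (∀ n : ℕ, MeasurableSet[G n] {ω | S' ω ≤ n}) ∧ S =ᵐ[P] S' := by
  choose B hB hSB using hS
  have hC : ∀ n, MeasurableSet[G n] (accumulate B n) := fun n =>
    .biUnion (to_countable _) fun k hk => hmono hk _ (hB k)
  have hSC : ∀ n : ℕ, {ω | S ω ≤ n} =ᵐ[P] accumulate B n := fun n => by
    have : {ω | S ω ≤ n} = ⋃ k ≤ n, {ω | S ω ≤ k} :=
      Subset.antisymm (subset_iUnion₂_of_subset n le_rfl subset_rfl)
        (iUnion₂_subset fun k hk _ h => le_trans (α := ℕ∞) h (by exact_mod_cast hk))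
    rw [this, accumulate_def]
    exact .countable_bUnion (to_countable _) fun k _ => hSB k
  have hfirst := firstEntry_le_coe_iff (monotone_accumulate (s := B))
  refine ⟨firstEntry (accumulate B), fun n => ?_, ?_⟩
  · simp_rw [hfirst]
    exact hC n
  · filter_upwards [ae_all_iff.mpr fun n => Filter.eventuallyEq_set.mp (hSC n)] with ω hω
    exact WithTop.eq_of_forall_le_coe_iff fun n => (hω n).trans (hfirst ω n).symm

theorem stmt_7_general {m : MeasurableSpace Ω} (G : ℕ → MeasurableSpace Ω)
    (hmono : Monotone G)
    (P : Measure Ω)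
    (S : Ω → ℕ∞)
    (hS : ∀ n : ℕ, MeasurableSet[complFilt G P n] {ω | S ω ≤ (n : ℕ∞)}) :
    ∃ S' : Ω → ℕ∞, (∀ n : ℕ, MeasurableSet[G n] {ω | S' ω ≤ (n : ℕ∞)}) ∧ S =ᵐ[P] S' :=
  exists_ae_eq_of_forall_exists_measurableSet_ae_eq hmono fun n =>
    exists_measurableSet_ae_eq_of_measurableSet_complFilt (hS n)

/-- Every stopping time of the completed filtration `Ḡ^P` is `P`-a.s. equal to a stopping
time of `G` itself (discrete time). -/
theorem stmt_7 {m : MeasurableSpace Ω} (G : ℕ → MeasurableSpace Ω)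
    (hmono : Monotone G) (hle : ∀ n, G n ≤ m)
    (P : Measure Ω) [IsProbabilityMeasure P] [P.IsComplete]
    (S : Ω → ℕ∞)
    (hS : ∀ n : ℕ, MeasurableSet[complFilt G P n] {ω | S ω ≤ (n : ℕ∞)}) :
    ∃ S' : Ω → ℕ∞, (∀ n : ℕ, MeasurableSet[G n] {ω | S' ω ≤ (n : ℕ∞)}) ∧ S =ᵐ[P] S' :=
  stmt_7_general (m := m) G hmono P S hS
end

section
/- Let T = ℕ, let G be a filtration on Ω, P a complete probability measure whose domain includes G_∞, S a stopping time of the completed filtration Ḡ^P, and U a stopping time of G with U = S P-a.s. Then the completion of G_U equals the σ-field Ḡ^P_S of the completed filtration at S, i.e. G_U ∨ N = Ḡ^P_S where N are the P-null sets. -/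
open MeasureTheory Set

variable {Ω T : Type*}

/-- The σ-field `G_S` of a filtration `G` at a stopping time `S`. -/
def sigmaAtTime [LinearOrder T] (G : T → MeasurableSpace Ω) (S : Ω → WithTop T)
    (hS : ∀ t : T, MeasurableSet[G t] {ω | S ω ≤ (t : WithTop T)}) : MeasurableSpace Ω where
  MeasurableSet' A := MeasurableSet[⨆ t, G t] A ∧
    ∀ t : T, MeasurableSet[G t] (A ∩ {ω | S ω ≤ (t : WithTop T)})
  measurableSet_empty := ⟨@MeasurableSet.empty _ (⨆ t, G t), fun t => by simp⟩
  measurableSet_compl := by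
    rintro A ⟨hAinf, hA⟩
    refine ⟨hAinf.compl, fun t => ?_⟩
    have : Aᶜ ∩ {ω | S ω ≤ (t : WithTop T)} =
        {ω | S ω ≤ (t : WithTop T)} ∩ (A ∩ {ω | S ω ≤ (t : WithTop T)})ᶜ := by
      ext ω
      simp only [Set.mem_inter_iff, Set.mem_compl_iff, Set.mem_setOf_eq]
      tauto
    rw [this]
    exact (hS t).inter (hA t).compl
  measurableSet_iUnion := by
    intro f hf
    refine ⟨MeasurableSet.iUnion fun i => (hf i).1, fun t => ?_⟩
    rw [Set.iUnion_inter]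
    exact MeasurableSet.iUnion fun i => (hf i).2 t

lemma mem_sup_null {m0 : MeasurableSpace Ω} (P : Measure Ω) (𝔊 : MeasurableSpace Ω)
    {C : Set Ω} :
    MeasurableSet[𝔊 ⊔ MeasurableSpace.generateFrom {A : Set Ω | P A = 0}] C ↔
      ∃ B, MeasurableSet[𝔊] B ∧ P (C \ B) = 0 ∧ P (B \ C) = 0 := by
  constructor
  · intro hC
    let D : MeasurableSpace Ω :=
      { MeasurableSet' := fun C => ∃ B, MeasurableSet[𝔊] B ∧ P (C \ B) = 0 ∧ P (B \ C) = 0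
        measurableSet_empty := ⟨∅, MeasurableSet.empty, by simp, by simp⟩
        measurableSet_compl := by
          rintro C ⟨B, hB, h1, h2⟩
          refine ⟨Bᶜ, hB.compl, ?_, ?_⟩
          · have : Cᶜ \ Bᶜ = B \ C := by ext ω; simp; tauto
            rwa [this]
          · have : Bᶜ \ Cᶜ = C \ B := by ext ω; simp; tauto
            rwa [this]
        measurableSet_iUnion := by
          intro f hf
          choose B hB h1 h2 using hf
          refine ⟨⋃ i, B i, MeasurableSet.iUnion hB, ?_, ?_⟩
          · refine measure_mono_null (fun ω hω => ?_) (measure_iUnion_null h1)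
            obtain ⟨⟨_, ⟨i, rfl⟩, hi⟩, hnB⟩ := hω
            exact mem_iUnion.mpr ⟨i, hi, fun h => hnB (mem_iUnion.mpr ⟨i, h⟩)⟩
          · refine measure_mono_null (fun ω hω => ?_) (measure_iUnion_null h2)
            obtain ⟨⟨_, ⟨i, rfl⟩, hi⟩, hnC⟩ := hω
            exact mem_iUnion.mpr ⟨i, hi, fun h => hnC (mem_iUnion.mpr ⟨i, h⟩)⟩ }
    have hle : 𝔊 ⊔ MeasurableSpace.generateFrom {A : Set Ω | P A = 0} ≤ D := by
      refine sup_le (fun s hs => ⟨s, hs, by simp, by simp⟩) ?_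
      refine MeasurableSpace.generateFrom_le fun s hs => ?_
      exact ⟨∅, @MeasurableSet.empty _ 𝔊, by simpa using hs, by simp⟩
    exact hle _ hC
  · rintro ⟨B, hB, h1, h2⟩
    have hBm : MeasurableSet[𝔊 ⊔ MeasurableSpace.generateFrom {A : Set Ω | P A = 0}] B :=
      le_sup_left (α := MeasurableSpace Ω) _ hB
    have hnull : ∀ {s : Set Ω}, P s = 0 →
        MeasurableSet[𝔊 ⊔ MeasurableSpace.generateFrom {A : Set Ω | P A = 0}] s := fun hs =>
      le_sup_right (α := MeasurableSpace Ω) _ (MeasurableSpace.measurableSet_generateFrom hs)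
    have hCeq : C = (B \ (B \ C)) ∪ (C \ B) := by
      ext ω
      by_cases hω : ω ∈ B <;> simp [hω]
    rw [hCeq]
    exact ((hBm.diff (hnull h2)).union (hnull h1))

/-- In discrete time, if `S` is a stopping time of the completed filtration `Ḡ^P` and `U` a
stopping time of `G` with `U = S` a.s., then `G_U ∨ N = Ḡ^P_S` (where `N` are the `P`-null
sets). -/
theorem stmt_8 {m : MeasurableSpace Ω} (G : ℕ → MeasurableSpace Ω)
    (hmono : Monotone G) (hle : ∀ n, G n ≤ m)
    (P : Measure Ω) [IsProbabilityMeasure P] [P.IsComplete]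
    (S U : Ω → ℕ∞)
    (hS : ∀ n : ℕ, MeasurableSet[complFilt G P n] {ω | S ω ≤ (n : ℕ∞)})
    (hU : ∀ n : ℕ, MeasurableSet[G n] {ω | U ω ≤ (n : ℕ∞)})
    (hUS : U =ᵐ[P] S) :
    sigmaAtTime G U hU ⊔ MeasurableSpace.generateFrom {A : Set Ω | P A = 0} =
      sigmaAtTime (complFilt G P) S hS := by
  set E : ℕ → Set Ω := fun n => {ω | U ω ≤ (n : ℕ∞)} with hEdef
  set E' : ℕ → Set Ω := fun n => {ω | S ω ≤ (n : ℕ∞)} with hE'def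
  have hUSnull : P {ω | ¬ U ω = S ω} = 0 := ae_iff.mp hUS
  have hEE' : ∀ n, P (E n \ E' n) = 0 := by
    intro n
    refine measure_mono_null ?_ hUSnull
    rintro ω ⟨h1, h2⟩ h
    have h1' : U ω ≤ (n : ℕ∞) := h1
    exact h2 (show S ω ≤ (n : ℕ∞) from h ▸ h1')
  have hE'E : ∀ n, P (E' n \ E n) = 0 := by
    intro n
    refine measure_mono_null ?_ hUSnull
    rintro ω ⟨h1, h2⟩ h
    have h1' : S ω ≤ (n : ℕ∞) := h1
    exact h2 (show U ω ≤ (n : ℕ∞) from h.symm ▸ h1')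
  have hGF : ∀ n, G n ≤ complFilt G P n := fun n => le_sup_left
  have hNF : ∀ n, MeasurableSpace.generateFrom {A : Set Ω | P A = 0} ≤ complFilt G P n :=
    fun n => le_sup_right
  have hsupF : (⨆ n, complFilt G P n) ≤
      (⨆ n, G n) ⊔ MeasurableSpace.generateFrom {A : Set Ω | P A = 0} :=
    iSup_le fun n => sup_le ((le_iSup G n).trans le_sup_left) le_sup_right
  have hGsupF : (⨆ n, G n) ≤ ⨆ n, complFilt G P n := iSup_mono hGF
  have hNsupF : MeasurableSpace.generateFrom {A : Set Ω | P A = 0} ≤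
      ⨆ n, complFilt G P n := (hNF 0).trans (le_iSup _ 0)
  refine le_antisymm (sup_le ?_ ?_) ?_
  · -- sigmaAtTime G U hU ≤ sigmaAtTime (complFilt G P) S hS
    rintro A ⟨hA1, hA2⟩
    refine ⟨hGsupF _ hA1, fun n => ?_⟩
    show MeasurableSet[G n ⊔ MeasurableSpace.generateFrom {A : Set Ω | P A = 0}] (A ∩ E' n)
    refine (mem_sup_null P (G n)).mpr ⟨A ∩ E n, (hA2 n), ?_, ?_⟩
    · refine measure_mono_null ?_ (hE'E n)
      rintro ω ⟨⟨hA, hE'⟩, hnE⟩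
      exact ⟨hE', fun h => hnE ⟨hA, h⟩⟩
    · refine measure_mono_null ?_ (hEE' n)
      rintro ω ⟨⟨hA, hE⟩, hnE'⟩
      exact ⟨hE, fun h => hnE' ⟨hA, h⟩⟩
  · -- null sets
    refine MeasurableSpace.generateFrom_le fun A hA => ?_
    refine ⟨hNsupF _ (MeasurableSpace.measurableSet_generateFrom hA), fun n => ?_⟩
    exact hNF n _ (MeasurableSpace.measurableSet_generateFrom
      (measure_mono_null Set.inter_subset_left hA))
  · -- hard direction
    rintro A ⟨hA1, hA2⟩
    obtain ⟨A₀, hA₀m, hAA₀, hA₀A⟩ := (mem_sup_null P (⨆ n, G n)).mp (hsupF _ hA1)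
    have key : ∀ n, ∃ B, MeasurableSet[G n] B ∧ B ⊆ E n ∧
        P ((A ∩ E n) \ B) = 0 ∧ P (B \ (A ∩ E n)) = 0 := by
      intro n
      obtain ⟨B, hBm, h1, h2⟩ := (mem_sup_null P (G n)).mp (hA2 n)
      refine ⟨B ∩ E n, hBm.inter (hU n), Set.inter_subset_right, ?_, ?_⟩
      · refine measure_mono_null ?_ (measure_union_null h1 (hEE' n))
        rintro ω ⟨⟨hA, hE⟩, hn⟩
        by_cases hE'ω : ω ∈ E' n
        · exact Or.inl ⟨⟨hA, hE'ω⟩, fun hB => hn ⟨hB, hE⟩⟩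
        · exact Or.inr ⟨hE, hE'ω⟩
      · refine measure_mono_null ?_ h2
        rintro ω ⟨⟨hB, hE⟩, hn⟩
        have hnA : ω ∉ A := fun hA => hn ⟨hA, hE⟩
        exact ⟨hB, fun hx => hnA hx.1⟩
    choose B hBm hBE h1 h2 using key
    -- the "first hitting" partition
    set Pn : ℕ → Set Ω := fun n => E n \ ⋃ k ∈ Finset.range n, E k with hPndef
    have hPnE : ∀ n, Pn n ⊆ E n := fun n => Set.diff_subset
    have hPnm : ∀ n m, n ≤ m → MeasurableSet[G m] (Pn n) := by
      intro n m' hnm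
      refine (hmono hnm _ (hU n)).diff ?_
      refine MeasurableSet.biUnion (Finset.range n).countable_toSet fun k hk => ?_
      exact hmono (le_trans (Nat.le_of_lt_succ (Nat.lt_succ_of_lt (Finset.mem_range.mp hk))) hnm)
        _ (hU k)
    set Bb : Set Ω := ⋃ n, B n ∩ Pn n with hBbdef
    set A' : Set Ω := Bb ∪ (A₀ \ ⋃ n, E n) with hA'def
    -- A' is measurable for sigmaAtTime G U hU
    have hA'sig : MeasurableSet[sigmaAtTime G U hU] A' := by
      constructor
      · refine MeasurableSet.union ?_ (hA₀m.diff ?_)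
        · exact MeasurableSet.iUnion fun n =>
            (le_iSup G n) _ ((hBm n).inter (hPnm n n le_rfl))
        · exact MeasurableSet.iUnion fun n => (le_iSup G n) _ (hU n)
      · intro m'
        show MeasurableSet[G m'] (A' ∩ E m')
        have hset : A' ∩ E m' = ⋃ n, (B n ∩ Pn n ∩ E m') := by
          rw [hA'def, Set.union_inter_distrib_right, hBbdef, Set.iUnion_inter]
          have : (A₀ \ ⋃ n, E n) ∩ E m' = ∅ := by
            ext ω
            simp only [Set.mem_inter_iff, Set.mem_diff, Set.mem_iUnion, Set.mem_empty_iff_false,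
              iff_false]
            rintro ⟨⟨_, hn⟩, hm⟩
            exact hn ⟨m', hm⟩
          rw [this, Set.union_empty]
        rw [hset]
        refine MeasurableSet.iUnion fun n => ?_
        by_cases hnm : n ≤ m'
        · exact ((hmono hnm _ (hBm n)).inter (hPnm n m' hnm)).inter (hU m')
        · have : B n ∩ Pn n ∩ E m' = ∅ := by
            ext ω
            simp only [Set.mem_inter_iff, Set.mem_empty_iff_false, iff_false]
            rintro ⟨⟨_, hP⟩, hm⟩
            refine hP.2 ?_
            simp only [Set.mem_iUnion]
            exact ⟨m', Finset.mem_range.mpr (Nat.lt_of_not_le hnm), hm⟩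
          rw [this]
          exact @MeasurableSet.empty _ (G m')
    -- A and A' differ by a null set
    have hZ : P ((⋃ n, (((A ∩ E n) \ B n) ∪ (B n \ (A ∩ E n)))) ∪ ((A \ A₀) ∪ (A₀ \ A))) = 0 :=
      measure_union_null
        (measure_iUnion_null fun n => measure_union_null (h1 n) (h2 n))
        (measure_union_null hAA₀ hA₀A)
    have hsub1 : A \ A' ⊆ (⋃ n, (((A ∩ E n) \ B n) ∪ (B n \ (A ∩ E n)))) ∪ ((A \ A₀) ∪ (A₀ \ A)) := by
      rintro ω ⟨hωA, hωA'⟩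
      by_cases hEinf : ω ∈ ⋃ n, E n
      · -- minimal n with ω ∈ E n
        have hex : ∃ n, ω ∈ E n := Set.mem_iUnion.mp hEinf
        set n := Nat.find hex with hn
        have hωPn : ω ∈ Pn n := by
          refine ⟨Nat.find_spec hex, ?_⟩
          simp only [Set.mem_iUnion]
          rintro ⟨k, hk, hωk⟩
          exact Nat.find_min hex (Finset.mem_range.mp hk) hωk
        have hωB : ω ∉ B n := by
          intro hωB
          exact hωA' (Or.inl (Set.mem_iUnion.mpr ⟨n, hωB, hωPn⟩))
        exact Or.inl (Set.mem_iUnion.mpr ⟨n, Or.inl ⟨⟨hωA, hPnE n hωPn⟩, hωB⟩⟩)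
      · have hωA₀ : ω ∉ A₀ := fun h => hωA' (Or.inr ⟨h, hEinf⟩)
        exact Or.inr (Or.inl ⟨hωA, hωA₀⟩)
    have hsub2 : A' \ A ⊆ (⋃ n, (((A ∩ E n) \ B n) ∪ (B n \ (A ∩ E n)))) ∪ ((A \ A₀) ∪ (A₀ \ A)) := by
      rintro ω ⟨hωA', hωA⟩
      rcases hωA' with hωB | ⟨hωA₀, _⟩
      · obtain ⟨n, hωBn, _⟩ := Set.mem_iUnion.mp hωB
        exact Or.inl (Set.mem_iUnion.mpr ⟨n, Or.inr ⟨hωBn, fun hx => hωA hx.1⟩⟩)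
      · exact Or.inr (Or.inr ⟨hωA₀, hωA⟩)
    exact (mem_sup_null P (sigmaAtTime G U hU)).mpr ⟨A', hA'sig, measure_mono_null hsub1 hZ, measure_mono_null hsub2 hZ⟩
end

section
/- Let (Ω, F, P) be a probability space, G ⊆ F a sub-σ-field, and X = (X_λ)_{λ∈Λ} a nonempty family of [-∞,∞]-valued random variables with P-integrable negative parts. Suppose that for each ε > 0 and M > 0, for all λ, λ' ∈ Λ there exists λ'' ∈ Λ with X_{λ''} ≥ (M ∧ X_λ) ∨ (M ∧ X_{λ'}) − ε P-a.s. Then P-a.s., E[esssup_{λ∈Λ} X_λ | G] = esssup_{λ∈Λ} E[X_λ | G]. -/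
/-!
`W ≤ Y`: every `E[X_l | G]` lies below `E[Z | G]` because conditional expectation is monotone.

`Y ≤ W`: as `∫_B Y = ∫_B Z`, it suffices that `∫_B Z ≤ q P(B)` whenever `B ∈ G` and `W < q`
on `B`. Fix a level `M > 0`. By the lattice property the truncations `M ⊓ X_l` form an
approximately upward directed family, so their partial maxima along a maximizing sequence
increase to a common a.s. upper bound `V` with
`∫_B V ≤ sup_l ∫_B (M ⊓ X_l) ≤ sup_l ∫_B E[X_l | G] ≤ q P(B)`. Minimality of the essential
supremum gives `M ⊓ Z ≤ V` on `B`, and letting `M → ∞` yields the bound for `Z`.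
-/

open MeasureTheory Set Filter

variable {Ω : Type*}

/-- The positive part of an extended-real number, as a value in `[0,∞]`. -/
noncomputable def epos (x : EReal) : ENNReal :=
  if x = ⊤ then ⊤ else ENNReal.ofReal x.toReal

/-- The negative part of an extended-real number, as a value in `[0,∞]`. -/
noncomputable def eneg (x : EReal) : ENNReal := epos (-x)

/-- `Y` is a version of the conditional expectation `E[X | G]` under `P`, for an
extended-real-valued `X` (with one of its parts integrable): `Y` is `G`-measurable and for
every `B ∈ G` the (possibly infinite) integrals of `X` and `Y` over `B` agree, expressed in
the subtraction-free form `∫_B Y⁺ + ∫_B X⁻ = ∫_B X⁺ + ∫_B Y⁻`. -/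
def IsCondExp {m : MeasurableSpace Ω} (G : MeasurableSpace Ω) (P : @Measure Ω m)
    (X Y : Ω → EReal) : Prop :=
  Measurable[G] Y ∧ ∀ B : Set Ω, MeasurableSet[G] B →
    (∫⁻ ω in B, epos (Y ω) ∂P) + (∫⁻ ω in B, eneg (X ω) ∂P) =
      (∫⁻ ω in B, epos (X ω) ∂P) + (∫⁻ ω in B, eneg (Y ω) ∂P)

/-- `Z` is a `P`-essential supremum of the family `F`: it is an a.s. upper bound of the
family which is a.s. below any other a.s. upper bound. -/
def IsEssSup {ι : Type*} {m : MeasurableSpace Ω} (P : Measure Ω)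
    (F : ι → Ω → EReal) (Z : Ω → EReal) : Prop :=
  (∀ i, ∀ᵐ ω ∂P, F i ω ≤ Z ω) ∧
    ∀ W : Ω → EReal, (∀ i, ∀ᵐ ω ∂P, F i ω ≤ W ω) → ∀ᵐ ω ∂P, Z ω ≤ W ω

open Topology

lemma epos_mono : Monotone epos := fun _ _ h => EReal.toENNReal_le_toENNReal h

lemma eneg_anti : Antitone eneg := fun _ _ h => epos_mono (EReal.neg_le_neg_iff.2 h)

lemma measurable_epos : Measurable epos := measurable_ereal_toENNReal

lemma measurable_eneg : Measurable eneg := measurable_epos.comp measurable_neg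

lemma epos_coe (r : ℝ) : epos r = ENNReal.ofReal r := rfl

lemma eneg_coe (r : ℝ) : eneg r = ENNReal.ofReal (-r) := rfl

lemma toReal_eq_epos_sub_eneg (x : EReal) : x.toReal = (epos x).toReal - (eneg x).toReal := by
  induction x with
  | bot => simp [epos, eneg]
  | coe r => simp [epos_coe, eneg_coe, ENNReal.toReal_ofReal', max_zero_sub_max_neg_zero_eq_self]
  | top => simp [epos, eneg]

lemma epos_min_coe (M : ℝ) (x : EReal) :
    epos (min (M : EReal) x) = min (ENNReal.ofReal M) (epos x) :=
  epos_mono.map_min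

lemma eneg_of_nonneg {x : EReal} (hx : 0 ≤ x) : eneg x = 0 :=
  EReal.toENNReal_of_nonpos ((EReal.neg_le_neg_iff.2 hx).trans_eq neg_zero)

lemma eneg_min_coe {M : ℝ} (hM : 0 ≤ M) (x : EReal) : eneg (min (M : EReal) x) = eneg x := by
  rcases le_total x M with h | h
  · rw [min_eq_right h]
  · have h0 : (0 : EReal) ≤ M := by exact_mod_cast hM
    rw [min_eq_left h, eneg_of_nonneg h0, eneg_of_nonneg (h0.trans h)]

lemma EReal.coe_toReal_min (M : ℝ) {x : EReal} (hx : x ≠ ⊥) :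
    (((min (M : EReal) x).toReal : ℝ) : EReal) = min (M : EReal) x :=
  EReal.coe_toReal ((min_le_left _ _).trans_lt (EReal.coe_lt_top M)).ne
    (by simp [hx])

lemma EReal.toReal_min_le {M v : ℝ} {x : EReal} (hx : x ≠ ⊥) (h : min (M : EReal) x ≤ v) :
    (min (M : EReal) x).toReal ≤ v := by
  rwa [← EReal.coe_le_coe_iff, EReal.coe_toReal_min M hx]

lemma EReal.le_of_toReal_min_le {M v : ℝ} {x : EReal} (hvM : v < M)
    (h : (min (M : EReal) x).toReal ≤ v) : x ≤ v := by
  rcases eq_or_ne x ⊥ with rfl | hx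
  · exact bot_le
  rw [← EReal.coe_le_coe_iff, EReal.coe_toReal_min M hx] at h
  have hlt : min (M : EReal) x < M := h.trans_lt (by exact_mod_cast hvM)
  rwa [min_eq_right (min_lt_iff.1 hlt |>.resolve_left (lt_irrefl _)).le] at h

lemma EReal.toReal_min_coe_le {M : ℝ} (hM : 0 ≤ M) (x : EReal) :
    (min (M : EReal) x).toReal ≤ M := by
  rcases eq_or_ne x ⊥ with rfl | hx
  · simpa using hM
  · exact EReal.toReal_min_le hx (min_le_left _ _)

lemma EReal.toReal_min_sup_le_add {M ε : ℝ} {x y z : EReal} (hx : x ≠ ⊥) (hy : y ≠ ⊥)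
    (hε : 0 ≤ ε) (h : min (M : EReal) x ⊔ min (M : EReal) y - ε ≤ z) :
    (min (M : EReal) x).toReal ⊔ (min (M : EReal) y).toReal ≤ (min (M : EReal) z).toReal + ε := by
  set a := (min (M : EReal) x).toReal
  set b := (min (M : EReal) y).toReal
  have ha : (a : EReal) = min (M : EReal) x := EReal.coe_toReal_min M hx
  have hb : (b : EReal) = min (M : EReal) y := EReal.coe_toReal_min M hy
  rw [← ha, ← hb, ← EReal.coe_strictMono.monotone.map_max, ← EReal.coe_sub] at h
  have hz : z ≠ ⊥ := ne_bot_of_le_ne_bot (EReal.coe_ne_bot _) h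
  have haM : a ≤ M := EReal.coe_le_coe_iff.1 (ha ▸ min_le_left _ _)
  have hbM : b ≤ M := EReal.coe_le_coe_iff.1 (hb ▸ min_le_left _ _)
  have hM : ((a ⊔ b - ε : ℝ) : EReal) ≤ M :=
    EReal.coe_le_coe_iff.2 (by linarith [max_le haM hbM])
  have := le_min hM h
  rw [← EReal.coe_toReal_min M hz, EReal.coe_le_coe_iff] at this
  linarith

lemma EReal.coe_ennreal_sub_coe_ennreal {a b : ENNReal} (ha : a ≠ ⊤) (hb : b ≠ ⊤) :
    (a : EReal) - b = ((a.toReal - b.toReal : ℝ) : EReal) := by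
  rw [EReal.coe_sub, EReal.coe_ennreal_toReal ha, EReal.coe_ennreal_toReal hb]

lemma EReal.coe_ennreal_iSup_le {ι : Sort*} {a : ι → ENNReal} {t : EReal} [Nonempty ι]
    (h : ∀ i, (a i : EReal) ≤ t) : ((⨆ i, a i : ENNReal) : EReal) ≤ t := by
  obtain ⟨i⟩ := ‹Nonempty ι›
  have ht : 0 ≤ t := (EReal.coe_ennreal_nonneg _).trans (h i)
  rw [← EReal.coe_toENNReal ht] at h ⊢
  exact EReal.coe_ennreal_le_coe_ennreal_iff.2
    (iSup_le fun i => EReal.coe_ennreal_le_coe_ennreal_iff.1 (h i))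

lemma ENNReal.iSup_min_ofReal_nat_add_one (a : ENNReal) :
    ⨆ n : ℕ, min (ENNReal.ofReal ((n : ℝ) + 1)) a = a := by
  have htop : ⨆ n : ℕ, ENNReal.ofReal ((n : ℝ) + 1) = ⊤ :=
    top_unique (ENNReal.iSup_natCast ▸ iSup_mono fun n => by
      rw [← ENNReal.ofReal_natCast]; exact ENNReal.ofReal_le_ofReal (by linarith))
  rw [← iSup_inf_eq, htop, top_inf_eq]

lemma EReal.coe_ennreal_sub_eq_of_add_eq {a b c d : ENNReal} (h : a + d = b + c) (hc : c ≠ ⊤)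
    (hd : d ≠ ⊤) : (a : EReal) - c = b - d := by
  by_cases ha : a = ⊤
  · have hb : b = ⊤ := by
      by_contra hb
      exact (ENNReal.add_ne_top.2 ⟨hb, hc⟩) (h ▸ ha ▸ top_add d)
    rw [ha, hb, ← EReal.coe_ennreal_toReal hc, ← EReal.coe_ennreal_toReal hd, EReal.coe_ennreal_top,
      EReal.top_sub_coe, EReal.top_sub_coe]
  · have hb : b ≠ ⊤ := fun hb => ENNReal.add_ne_top.2 ⟨ha, hd⟩ (h.trans (hb ▸ top_add c))
    have := congrArg ENNReal.toReal h
    rw [ENNReal.toReal_add ha hd, ENNReal.toReal_add hb hc] at this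
    rw [EReal.coe_ennreal_sub_coe_ennreal ha hc, EReal.coe_ennreal_sub_coe_ennreal hb hd]
    exact congrArg _ (by linarith)

section EIntegral

variable {m : MeasurableSpace Ω} {μ : Measure Ω} {f g : Ω → EReal}

-- Meaningful only when `∫ f⁻ < ∞`: otherwise `EReal` subtraction may produce `⊤ - ⊤ = ⊥`.
noncomputable def eintegral (μ : Measure Ω) (f : Ω → EReal) : EReal :=
  (∫⁻ ω, epos (f ω) ∂μ : EReal) - (∫⁻ ω, eneg (f ω) ∂μ : EReal)

lemma eintegral_mono_ae (h : ∀ᵐ ω ∂μ, f ω ≤ g ω) : eintegral μ f ≤ eintegral μ g :=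
  EReal.sub_le_sub
    (EReal.coe_ennreal_le_coe_ennreal_iff.2 (lintegral_mono_ae (h.mono fun _ h => epos_mono h)))
    (EReal.coe_ennreal_le_coe_ennreal_iff.2 (lintegral_mono_ae (h.mono fun _ h => eneg_anti h)))

lemma eintegral_const [IsFiniteMeasure μ] (c : ℝ) :
    eintegral μ (fun _ => (c : EReal)) = ((c * μ.real univ : ℝ) : EReal) := by
  simp only [eintegral, epos_coe, eneg_coe, lintegral_const]
  rw [EReal.coe_ennreal_sub_coe_ennreal (by finiteness) (by finiteness), ENNReal.toReal_mul,
    ENNReal.toReal_mul, ENNReal.toReal_ofReal', ENNReal.toReal_ofReal', ← measureReal_def,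
    ← sub_mul, max_zero_sub_max_neg_zero_eq_self]

lemma integrable_toReal_of_lintegral_epos_eneg_ne_top (hf : AEMeasurable f μ)
    (hp : ∫⁻ ω, epos (f ω) ∂μ ≠ ⊤) (hn : ∫⁻ ω, eneg (f ω) ∂μ ≠ ⊤) :
    Integrable (fun ω => (f ω).toReal) μ := by
  simp_rw [toReal_eq_epos_sub_eneg]
  exact (integrable_toReal_of_lintegral_ne_top (measurable_epos.comp_aemeasurable hf) hp).sub
    (integrable_toReal_of_lintegral_ne_top (measurable_eneg.comp_aemeasurable hf) hn)

lemma eintegral_eq_integral_toReal (hf : AEMeasurable f μ)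
    (hp : ∫⁻ ω, epos (f ω) ∂μ ≠ ⊤) (hn : ∫⁻ ω, eneg (f ω) ∂μ ≠ ⊤) :
    eintegral μ f = ((∫ ω, (f ω).toReal ∂μ : ℝ) : EReal) := by
  have hpm : AEMeasurable (fun ω => epos (f ω)) μ := measurable_epos.comp_aemeasurable hf
  have hnm : AEMeasurable (fun ω => eneg (f ω)) μ := measurable_eneg.comp_aemeasurable hf
  simp_rw [toReal_eq_epos_sub_eneg]
  rw [integral_sub (integrable_toReal_of_lintegral_ne_top hpm hp)
    (integrable_toReal_of_lintegral_ne_top hnm hn), integral_toReal hpm (ae_lt_top' hpm hp),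
    integral_toReal hnm (ae_lt_top' hnm hn), eintegral, EReal.coe_ennreal_sub_coe_ennreal hp hn]

lemma eintegral_le_of_forall_min_le (hf : Measurable f) (hn : ∫⁻ ω, eneg (f ω) ∂μ ≠ ⊤)
    {r : EReal} (h : ∀ M : ℝ, 0 < M → eintegral μ (fun ω => min (M : EReal) (f ω)) ≤ r) :
    eintegral μ f ≤ r := by
  have hsup : ∫⁻ ω, epos (f ω) ∂μ =
      ⨆ n : ℕ, ∫⁻ ω, epos (min (((n : ℝ) + 1 : ℝ) : EReal) (f ω)) ∂μ := by
    simp_rw [epos_min_coe]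
    have hm : ∀ n : ℕ, Measurable fun ω => min (ENNReal.ofReal ((n : ℝ) + 1)) (epos (f ω)) :=
      fun n => measurable_const.min (measurable_epos.comp hf)
    rw [← lintegral_iSup hm fun i j hij ω =>
      min_le_min_right _ (ENNReal.ofReal_le_ofReal (by gcongr))]
    simp_rw [ENNReal.iSup_min_ofReal_nat_add_one]
  have hc₁ : ((∫⁻ ω, eneg (f ω) ∂μ : ENNReal) : EReal) ≠ ⊥ := EReal.coe_ennreal_ne_bot _
  have hc₂ : ((∫⁻ ω, eneg (f ω) ∂μ : ENNReal) : EReal) ≠ ⊤ := by simpa using hn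
  simp only [eintegral] at h ⊢
  rw [EReal.sub_le_iff_le_add (Or.inl hc₁) (Or.inl hc₂), hsup]
  refine EReal.coe_ennreal_iSup_le fun n => ?_
  have := h ((n : ℝ) + 1) (by positivity)
  simp_rw [eneg_min_coe (by positivity : (0 : ℝ) ≤ (n : ℝ) + 1)] at this
  rwa [EReal.sub_le_iff_le_add (Or.inl hc₁) (Or.inl hc₂)] at this

end EIntegral

section ConditionalExpectation

variable {G m : MeasurableSpace Ω} {P : @Measure Ω m} {X Y : Ω → EReal}

lemma IsCondExp.setLIntegral_eneg_le (hG : G ≤ m) (h : IsCondExp G P X Y) {B : Set Ω}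
    (hB : MeasurableSet[G] B) : ∫⁻ ω in B, eneg (Y ω) ∂P ≤ ∫⁻ ω in B, eneg (X ω) ∂P := by
  -- On `C = B ∩ {Y < 0}` the term `∫ Y⁺` vanishes, so the defining identity bounds `∫ Y⁻`.
  have hN : MeasurableSet[G] {ω | Y ω < 0} := measurableSet_lt h.1 measurable_const
  set C := B ∩ {ω | Y ω < 0}
  have hC : MeasurableSet[G] C := hB.inter hN
  have hYC : ∫⁻ ω in B, eneg (Y ω) ∂P = ∫⁻ ω in C, eneg (Y ω) ∂P := by
    rw [← lintegral_inter_add_sdiff _ B (hG _ hN),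
      setLIntegral_eq_zero ((hG _ hB).diff (hG _ hN)) fun ω hω => eneg_of_nonneg (not_lt.1 hω.2),
      add_zero]
  have hposC : ∫⁻ ω in C, epos (Y ω) ∂P = 0 :=
    setLIntegral_eq_zero (hG _ hC) fun ω hω => EReal.toENNReal_of_nonpos hω.2.le
  calc ∫⁻ ω in B, eneg (Y ω) ∂P = ∫⁻ ω in C, eneg (Y ω) ∂P := hYC
    _ ≤ (∫⁻ ω in C, epos (X ω) ∂P) + ∫⁻ ω in C, eneg (Y ω) ∂P := le_add_self
    _ = ∫⁻ ω in C, eneg (X ω) ∂P := by rw [← h.2 C hC, hposC, zero_add]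
    _ ≤ ∫⁻ ω in B, eneg (X ω) ∂P := lintegral_mono_set inter_subset_left

lemma IsCondExp.eintegral_restrict_eq (hG : G ≤ m) (h : IsCondExp G P X Y)
    (hX : ∫⁻ ω, eneg (X ω) ∂P ≠ ⊤) {B : Set Ω} (hB : MeasurableSet[G] B) :
    eintegral (P.restrict B) Y = eintegral (P.restrict B) X := by
  have hXB : ∫⁻ ω in B, eneg (X ω) ∂P ≠ ⊤ := ne_top_of_le_ne_top hX (setLIntegral_le_lintegral _ _)
  exact EReal.coe_ennreal_sub_eq_of_add_eq (h.2 B hB)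
    (ne_top_of_le_ne_top hXB (h.setLIntegral_eneg_le hG hB)) hXB

end ConditionalExpectation

section Comparison

variable {m : MeasurableSpace Ω} {μ : Measure Ω} [IsFiniteMeasure μ] {f g : Ω → EReal}

lemma eintegral_restrict_le_of_ae_le {B : Set Ω} {c : ℝ}
    (h : ∀ᵐ ω ∂μ.restrict B, f ω ≤ c) : eintegral (μ.restrict B) f ≤ ((c * μ.real B : ℝ) : EReal) :=
  (eintegral_mono_ae h).trans_eq (by rw [eintegral_const, measureReal_restrict_apply_univ])

lemma le_eintegral_restrict_of_ae_le {B : Set Ω} {c : ℝ}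
    (h : ∀ᵐ ω ∂μ.restrict B, (c : EReal) ≤ f ω) :
    ((c * μ.real B : ℝ) : EReal) ≤ eintegral (μ.restrict B) f :=
  (eintegral_mono_ae h).trans_eq' (by rw [eintegral_const, measureReal_restrict_apply_univ])

lemma ae_le_of_forall_eintegral_le (hf : Measurable f) (hg : Measurable g)
    (h : ∀ q q' : ℚ, q < q' →
      eintegral (μ.restrict {ω | g ω < (q : ℝ) ∧ ((q' : ℝ) : EReal) < f ω}) f ≤
        ((q * μ.real {ω | g ω < (q : ℝ) ∧ ((q' : ℝ) : EReal) < f ω} : ℝ) : EReal)) :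
    ∀ᵐ ω ∂μ, f ω ≤ g ω := by
  have hnull : ∀ q q' : ℚ, q < q' → μ {ω | g ω < (q : ℝ) ∧ ((q' : ℝ) : EReal) < f ω} = 0 := by
    intro q q' hqq'
    have hB : MeasurableSet {ω | g ω < (q : ℝ) ∧ ((q' : ℝ) : EReal) < f ω} :=
      (measurableSet_lt hg measurable_const).inter (measurableSet_lt measurable_const hf)
    have hlow := le_eintegral_restrict_of_ae_le (μ := μ) (c := q')
      ((ae_restrict_mem hB).mono fun ω hω => hω.2.le)
    have hle := EReal.coe_le_coe_iff.1 (hlow.trans (h q q' hqq'))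
    have hq : (q : ℝ) < q' := by exact_mod_cast hqq'
    rw [← measureReal_eq_zero_iff]
    nlinarith [measureReal_nonneg (μ := μ) (s := {ω | g ω < (q : ℝ) ∧ ((q' : ℝ) : EReal) < f ω})]
  rw [ae_iff]
  refine measure_mono_null (fun ω (hω : ¬ f ω ≤ g ω) => ?_)
    (measure_iUnion_null fun q => measure_iUnion_null fun q' => measure_iUnion_null (hnull q q'))
  obtain ⟨q, hgq, hqf⟩ := EReal.exists_rat_btwn_of_lt (not_le.1 hω)
  obtain ⟨q', hqq', hq'f⟩ := EReal.exists_rat_btwn_of_lt hqf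
  exact mem_iUnion.2 ⟨q, mem_iUnion.2 ⟨q', mem_iUnion.2 ⟨by exact_mod_cast hqq', hgq, hq'f⟩⟩⟩

end Comparison

theorem IsCondExp.ae_le {G m : MeasurableSpace Ω} {P : @Measure Ω m} [IsFiniteMeasure P]
    (hG : G ≤ m) {X₁ X₂ Y₁ Y₂ : Ω → EReal} (h₁ : IsCondExp G P X₁ Y₁) (h₂ : IsCondExp G P X₂ Y₂)
    (hX₁ : ∫⁻ ω, eneg (X₁ ω) ∂P ≠ ⊤) (hX₂ : ∫⁻ ω, eneg (X₂ ω) ∂P ≠ ⊤)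
    (hle : ∀ᵐ ω ∂P, X₁ ω ≤ X₂ ω) : ∀ᵐ ω ∂P, Y₁ ω ≤ Y₂ ω := by
  refine ae_le_of_forall_eintegral_le (h₁.1.mono hG le_rfl) (h₂.1.mono hG le_rfl) fun q q' _ => ?_
  have hB : MeasurableSet[G] {ω | Y₂ ω < (q : ℝ) ∧ ((q' : ℝ) : EReal) < Y₁ ω} :=
    (measurableSet_lt h₂.1 measurable_const).inter (measurableSet_lt measurable_const h₁.1)
  calc _ = eintegral _ X₁ := h₁.eintegral_restrict_eq hG hX₁ hB
    _ ≤ eintegral _ X₂ := eintegral_mono_ae (ae_restrict_of_ae hle)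
    _ = eintegral _ Y₂ := (h₂.eintegral_restrict_eq hG hX₂ hB).symm
    _ ≤ _ := eintegral_restrict_le_of_ae_le ((ae_restrict_mem (hG _ hB)).mono fun ω hω => hω.1.le)

section ApproxDirected

variable {m : MeasurableSpace Ω} {μ : Measure Ω} {Λ : Type*} {F : Λ → Ω → ℝ}

def AEApproxDominated (μ : Measure Ω) (F : Λ → Ω → ℝ) (g : Ω → ℝ) : Prop :=
  ∀ ε > 0, ∃ l, ∀ᵐ ω ∂μ, g ω ≤ F l ω + ε

def AEApproxDirected (μ : Measure Ω) (F : Λ → Ω → ℝ) : Prop :=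
  ∀ l l', AEApproxDominated μ F (F l ⊔ F l')

lemma AEApproxDominated.sup (hF : AEApproxDirected μ F) {g : Ω → ℝ}
    (hg : AEApproxDominated μ F g) (l' : Λ) : AEApproxDominated μ F (g ⊔ F l') := by
  intro ε hε
  obtain ⟨l, hl⟩ := hg (ε / 2) (by positivity)
  obtain ⟨l'', hl''⟩ := hF l l' (ε / 2) (by positivity)
  refine ⟨l'', ?_⟩
  filter_upwards [hl, hl''] with ω hgl (hll'' : max (F l ω) (F l' ω) ≤ F l'' ω + ε / 2)
  have := le_max_left (F l ω) (F l' ω)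
  have := le_max_right (F l ω) (F l' ω)
  exact max_le (by linarith) (by linarith)

lemma AEApproxDirected.aeApproxDominated_partialSups (hF : AEApproxDirected μ F) (ls : ℕ → Λ)
    (n : ℕ) : AEApproxDominated μ F (partialSups (fun k => F (ls k)) n) := by
  induction n with
  | zero => exact fun ε hε => ⟨ls 0, ae_of_all _ fun ω => by simp; linarith⟩
  | succ n ih => simpa only [partialSups_add_one] using ih.sup hF (ls (n + 1))

lemma AEApproxDominated.integral_le [IsFiniteMeasure μ] {g : Ω → ℝ}
    (hg : AEApproxDominated μ F g) (hgi : Integrable g μ) (hFi : ∀ l, Integrable (F l) μ)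
    {c : ℝ} (hc : ∀ l, ∫ ω, F l ω ∂μ ≤ c) : ∫ ω, g ω ∂μ ≤ c := by
  refine le_of_forall_pos_le_add fun ε hε => ?_
  have hu : 0 ≤ μ.real univ := measureReal_nonneg
  obtain ⟨l, hl⟩ := hg (ε / (μ.real univ + 1)) (by positivity)
  have hsmall : μ.real univ * (ε / (μ.real univ + 1)) ≤ ε := by
    rw [mul_div_assoc', div_le_iff₀ (by positivity)]; nlinarith
  calc ∫ ω, g ω ∂μ ≤ ∫ ω, F l ω + ε / (μ.real univ + 1) ∂μ :=
        integral_mono_ae hgi ((hFi l).add (integrable_const _)) hl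
    _ = ∫ ω, F l ω ∂μ + μ.real univ * (ε / (μ.real univ + 1)) := by
        rw [integral_add (hFi l) (integrable_const _), integral_const, smul_eq_mul]
    _ ≤ c + ε := add_le_add (hc l) hsmall

lemma ae_le_of_integral_max_le {f g : Ω → ℝ} (hf : Integrable f μ) (hg : Integrable g μ)
    (h : ∫ ω, max (f ω) (g ω) ∂μ ≤ ∫ ω, f ω ∂μ) : ∀ᵐ ω ∂μ, g ω ≤ f ω := by
  have hle : f ≤ᵐ[μ] fun ω => max (f ω) (g ω) := ae_of_all _ fun ω => le_max_left _ _
  have heq := (integral_eq_iff_of_ae_le hf (hf.sup hg) hle).1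
    (le_antisymm (integral_mono_ae hf (hf.sup hg) hle) h)
  filter_upwards [heq] with ω hω
  exact max_eq_left_iff.1 hω.symm

lemma integrable_ciSup_of_monotone [IsFiniteMeasure μ] {f : ℕ → Ω → ℝ}
    (hfi : ∀ n, Integrable (f n) μ) (hmono : ∀ ω, Monotone fun n => f n ω) {M : ℝ}
    (hM : ∀ n ω, f n ω ≤ M) : Integrable (fun ω => ⨆ n, f n ω) μ := by
  have hbdd : ∀ ω, BddAbove (range fun n => f n ω) := fun ω => ⟨M, forall_mem_range.2 (hM · ω)⟩
  refine ((hfi 0).abs.add (integrable_const |M|)).mono'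
    (aestronglyMeasurable_of_tendsto_ae atTop (fun n => (hfi n).1)
      (ae_of_all _ fun ω => tendsto_atTop_ciSup (hmono ω) (hbdd ω)))
    (ae_of_all _ fun ω => ?_)
  have h0 : f 0 ω ≤ ⨆ n, f n ω := le_ciSup (hbdd ω) 0
  have hM' : ⨆ n, f n ω ≤ M := ciSup_le (hM · ω)
  rw [Real.norm_eq_abs, Pi.add_apply, abs_le]
  constructor <;> cases abs_cases (f 0 ω) <;> cases abs_cases M <;> linarith

/- `V` is the increasing limit of the partial maxima of `F` along a maximizing sequence, so
`∫ V = ⨆ l, ∫ F l`; since also `∫ max V (F l) ≤ ⨆ l, ∫ F l`, every `F l` lies below `V`. -/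
theorem AEApproxDirected.exists_integral_le [IsFiniteMeasure μ] [Nonempty Λ]
    (hF : AEApproxDirected μ F) (hFi : ∀ l, Integrable (F l) μ) {M : ℝ} (hM : ∀ l ω, F l ω ≤ M)
    {c : ℝ} (hc : ∀ l, ∫ ω, F l ω ∂μ ≤ c) :
    ∃ V : Ω → ℝ, Integrable V μ ∧ (∀ l, ∀ᵐ ω ∂μ, F l ω ≤ V ω) ∧ ∫ ω, V ω ∂μ ≤ c := by
  set S := ⨆ l, ∫ ω, F l ω ∂μ
  have hbdd : BddAbove (range fun l => ∫ ω, F l ω ∂μ) := ⟨c, forall_mem_range.2 hc⟩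
  obtain ⟨u, -, hu, hus⟩ := exists_seq_tendsto_sSup (range_nonempty _) hbdd
  choose ls hls using hus
  set Gs : ℕ → Ω → ℝ := fun n => partialSups (fun k => F (ls k)) n
  have hGi : ∀ n, Integrable (Gs n) μ := by
    intro n
    induction n with
    | zero => simpa [Gs] using hFi (ls 0)
    | succ n ih => simpa only [Gs, partialSups_add_one] using ih.sup (hFi _)
  have hGmono : ∀ ω, Monotone fun n => Gs n ω :=
    fun ω i j hij => Pi.le_def.1 ((partialSups _).monotone hij) ω
  have hGM : ∀ n ω, Gs n ω ≤ M := fun n =>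
    Pi.le_def.1 (partialSups_le_iff.2 fun k _ => (hM (ls k) : F (ls k) ≤ fun _ => M))
  set V : Ω → ℝ := fun ω => ⨆ n, Gs n ω
  have hVi : Integrable V μ := integrable_ciSup_of_monotone hGi hGmono hGM
  have hGV : ∀ n ω, Gs n ω ≤ V ω := fun n ω => le_ciSup ⟨M, forall_mem_range.2 (hGM · ω)⟩ n
  have hGtend : ∀ ω, Tendsto (fun n => Gs n ω) atTop (𝓝 (V ω)) :=
    fun ω => tendsto_atTop_ciSup (hGmono ω) ⟨M, forall_mem_range.2 (hGM · ω)⟩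
  have hVS : ∫ ω, V ω ∂μ = S := by
    refine le_antisymm (le_of_tendsto' (integral_tendsto_of_tendsto_of_monotone hGi hVi
      (ae_of_all _ hGmono) (ae_of_all _ hGtend)) fun n => ?_)
      (le_of_tendsto hu (Eventually.of_forall fun n => ?_))
    · exact (hF.aeApproxDominated_partialSups ls n).integral_le (hGi n) hFi (le_ciSup hbdd)
    · rw [← hls n]
      exact integral_mono (hFi _) hVi fun ω =>
        (Pi.le_def.1 (le_partialSups (fun k => F (ls k)) n) ω).trans (hGV n ω)
  refine ⟨V, hVi, fun l => ae_le_of_integral_max_le hVi (hFi l) ?_, hVS.le.trans (ciSup_le hc)⟩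
  refine hVS ▸ le_of_tendsto' (integral_tendsto_of_tendsto_of_monotone
    (fun n => (hGi n).sup (hFi l)) (hVi.sup (hFi l))
    (ae_of_all _ fun ω i j hij => max_le_max_right _ (hGmono ω hij))
    (ae_of_all _ fun ω => (hGtend ω).max tendsto_const_nhds)) fun n => ?_
  exact ((hF.aeApproxDominated_partialSups ls n).sup hF l).integral_le ((hGi n).sup (hFi l)) hFi
    (le_ciSup hbdd)

end ApproxDirected

section Truncation

variable {m : MeasurableSpace Ω} {μ : Measure Ω} {f : Ω → EReal}

lemma ae_ne_bot_of_lintegral_eneg_ne_top (hf : AEMeasurable f μ) (h : ∫⁻ ω, eneg (f ω) ∂μ ≠ ⊤) :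
    ∀ᵐ ω ∂μ, f ω ≠ ⊥ := by
  filter_upwards [ae_lt_top' (measurable_eneg.comp_aemeasurable hf) h] with ω hω hbot
  simp [hbot, eneg, epos] at hω

variable [IsFiniteMeasure μ] {M : ℝ}

lemma lintegral_epos_min_ne_top : ∫⁻ ω, epos (min (M : EReal) (f ω)) ∂μ ≠ ⊤ :=
  ne_top_of_le_ne_top (by rw [lintegral_const, epos_coe]; finiteness)
    (lintegral_mono fun ω => epos_mono (min_le_left (M : EReal) (f ω)))

lemma integrable_toReal_min (hf : AEMeasurable f μ) (hM : 0 ≤ M)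
    (h : ∫⁻ ω, eneg (f ω) ∂μ ≠ ⊤) : Integrable (fun ω => (min (M : EReal) (f ω)).toReal) μ :=
  integrable_toReal_of_lintegral_epos_eneg_ne_top (aemeasurable_const.min hf)
    lintegral_epos_min_ne_top (by simpa only [eneg_min_coe hM] using h)

lemma eintegral_min_eq_integral (hf : AEMeasurable f μ) (hM : 0 ≤ M)
    (h : ∫⁻ ω, eneg (f ω) ∂μ ≠ ⊤) :
    eintegral μ (fun ω => min (M : EReal) (f ω)) =
      ((∫ ω, (min (M : EReal) (f ω)).toReal ∂μ : ℝ) : EReal) :=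
  eintegral_eq_integral_toReal (aemeasurable_const.min hf) lintegral_epos_min_ne_top
    (by simpa only [eneg_min_coe hM] using h)

end Truncation

lemma IsCondExp.integral_toReal_min_le {G m : MeasurableSpace Ω} {P : @Measure Ω m}
    [IsFiniteMeasure P] (hG : G ≤ m) {X Y : Ω → EReal} (h : IsCondExp G P X Y)
    (hX : Measurable X) (hneg : ∫⁻ ω, eneg (X ω) ∂P ≠ ⊤) {B : Set Ω} (hBG : MeasurableSet[G] B)
    {q : ℝ} (hYq : ∀ᵐ ω ∂P.restrict B, Y ω ≤ q) {M : ℝ} (hM : 0 ≤ M) :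
    ∫ ω, (min (M : EReal) (X ω)).toReal ∂P.restrict B ≤ q * P.real B := by
  have hnegB : ∫⁻ ω, eneg (X ω) ∂P.restrict B ≠ ⊤ :=
    ne_top_of_le_ne_top hneg (setLIntegral_le_lintegral _ _)
  refine EReal.coe_le_coe_iff.1 ?_
  calc _ = eintegral (P.restrict B) (fun ω => min (M : EReal) (X ω)) :=
        (eintegral_min_eq_integral hX.aemeasurable hM hnegB).symm
    _ ≤ eintegral (P.restrict B) X := eintegral_mono_ae (ae_of_all _ fun ω => min_le_right _ _)
    _ = eintegral (P.restrict B) Y := (h.eintegral_restrict_eq hG hneg hBG).symm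
    _ ≤ _ := eintegral_restrict_le_of_ae_le hYq

lemma aeApproxDirected_toReal_min {m : MeasurableSpace Ω} {μ : Measure Ω} {Λ : Type*}
    {X : Λ → Ω → EReal} (hX : ∀ l, ∀ᵐ ω ∂μ, X l ω ≠ ⊥) {M : ℝ}
    (hlat : ∀ ε : ℝ, 0 < ε → ∀ l l' : Λ, ∃ l'' : Λ,
      ∀ᵐ ω ∂μ, ((M : EReal) ⊓ X l ω) ⊔ ((M : EReal) ⊓ X l' ω) - (ε : EReal) ≤ X l'' ω) :
    AEApproxDirected μ fun l ω => (min (M : EReal) (X l ω)).toReal := by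
  intro l l' ε hε
  obtain ⟨l'', hl''⟩ := hlat ε hε l l'
  refine ⟨l'', ?_⟩
  filter_upwards [hl'', hX l, hX l'] with ω h hl hl'
  exact EReal.toReal_min_sup_le_add hl hl' hε.le h

lemma IsEssSup.ae_restrict_toReal_min_le {m : MeasurableSpace Ω} {P : Measure Ω} {ι : Type*}
    {F : ι → Ω → EReal} {Z : Ω → EReal} (hZ : IsEssSup P F Z) {B : Set Ω} (hB : MeasurableSet B)
    {M : ℝ} {V : Ω → ℝ} (hV : ∀ i, ∀ᵐ ω ∂P.restrict B, (min (M : EReal) (F i ω)).toReal ≤ V ω)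
    (hZbot : ∀ᵐ ω ∂P.restrict B, Z ω ≠ ⊥) :
    ∀ᵐ ω ∂P.restrict B, (min (M : EReal) (Z ω)).toReal ≤ V ω := by
  classical
  -- `U` dominates every `F i`, hence `Z`, and equals `V` wherever `V < M` on `B`.
  set U : Ω → EReal := fun ω => if ω ∈ B ∧ V ω < M then (V ω : EReal) else ⊤
  have hFU : ∀ i, ∀ᵐ ω ∂P, F i ω ≤ U ω := by
    intro i
    filter_upwards [(ae_restrict_iff' hB).1 (hV i)] with ω hω
    simp only [U]
    split_ifs with h
    · exact EReal.le_of_toReal_min_le h.2 (hω h.1)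
    · exact le_top
  filter_upwards [ae_restrict_of_ae (hZ.2 U hFU), hZbot, ae_restrict_mem hB] with ω hZU hZω hωB
  refine EReal.toReal_min_le hZω ?_
  by_cases hVM : V ω < M
  · have hUV : U ω = V ω := if_pos ⟨hωB, hVM⟩
    exact (min_le_right _ _).trans (hUV ▸ hZU)
  · exact (min_le_left _ _).trans (by exact_mod_cast not_lt.1 hVM)

section EssSup

variable {Λ : Type*} {G m : MeasurableSpace Ω} {P : @Measure Ω m}
  {X : Λ → Ω → EReal} {Z : Ω → EReal} {k : Λ → Ω → EReal} {W : Ω → EReal}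

lemma IsEssSup.lintegral_eneg_ne_top [Nonempty Λ] (hZ : IsEssSup P X Z)
    (hneg : ∀ l, ∫⁻ ω, eneg (X l ω) ∂P < ⊤) : ∫⁻ ω, eneg (Z ω) ∂P ≠ ⊤ :=
  let ⟨l₀⟩ := ‹Nonempty Λ›
  ne_top_of_le_ne_top (hneg l₀).ne (lintegral_mono_ae ((hZ.1 l₀).mono fun _ h => eneg_anti h))

lemma IsEssSup.eintegral_restrict_le [IsFiniteMeasure P] [Nonempty Λ] (hG : G ≤ m)
    (hX : ∀ l, Measurable[m] (X l)) (hneg : ∀ l, ∫⁻ ω, eneg (X l ω) ∂P < ⊤)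
    (hlat : ∀ ε : ℝ, 0 < ε → ∀ M : ℝ, 0 < M → ∀ l l' : Λ, ∃ l'' : Λ,
      ∀ᵐ ω ∂P, ((M : EReal) ⊓ X l ω) ⊔ ((M : EReal) ⊓ X l' ω) - (ε : EReal) ≤ X l'' ω)
    (hZmeas : Measurable[m] Z) (hZ : IsEssSup P X Z) (hk : ∀ l, IsCondExp G P (X l) (k l))
    (hkW : ∀ l, ∀ᵐ ω ∂P, k l ω ≤ W ω) {B : Set Ω} (hBG : MeasurableSet[G] B) {q : ℝ}
    (hBW : ∀ ω ∈ B, W ω < q) : eintegral (P.restrict B) Z ≤ ((q * P.real B : ℝ) : EReal) := by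
  have hB : MeasurableSet B := hG _ hBG
  have hnegB : ∀ l, ∫⁻ ω, eneg (X l ω) ∂P.restrict B ≠ ⊤ :=
    fun l => ne_top_of_le_ne_top (hneg l).ne (setLIntegral_le_lintegral _ _)
  have hnegZB : ∫⁻ ω, eneg (Z ω) ∂P.restrict B ≠ ⊤ :=
    ne_top_of_le_ne_top (hZ.lintegral_eneg_ne_top hneg) (setLIntegral_le_lintegral _ _)
  refine eintegral_le_of_forall_min_le hZmeas hnegZB fun M hM => ?_
  have hFi : ∀ l, Integrable (fun ω => (min (M : EReal) (X l ω)).toReal) (P.restrict B) :=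
    fun l => integrable_toReal_min (hX l).aemeasurable hM.le (hnegB l)
  have hFq : ∀ l, ∫ ω, (min (M : EReal) (X l ω)).toReal ∂P.restrict B ≤ q * P.real B := by
    refine fun l => (hk l).integral_toReal_min_le hG (hX l) (hneg l).ne hBG ?_ hM.le
    filter_upwards [ae_restrict_of_ae (hkW l), ae_restrict_mem hB] with ω hkω hω
    exact (hkω.trans_lt (hBW ω hω)).le
  have hXbot : ∀ l, ∀ᵐ ω ∂P.restrict B, X l ω ≠ ⊥ :=
    fun l => ae_ne_bot_of_lintegral_eneg_ne_top (hX l).aemeasurable (hnegB l)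
  obtain ⟨V, hVi, hFV, hVq⟩ := (aeApproxDirected_toReal_min hXbot fun ε hε l l' =>
    (hlat ε hε M hM l l').imp fun _ h => ae_restrict_of_ae h).exists_integral_le hFi
    (fun l ω => EReal.toReal_min_coe_le hM.le _) hFq
  have hZV := hZ.ae_restrict_toReal_min_le hB hFV
    (ae_ne_bot_of_lintegral_eneg_ne_top hZmeas.aemeasurable hnegZB)
  rw [eintegral_min_eq_integral hZmeas.aemeasurable hM.le hnegZB, EReal.coe_le_coe_iff]
  exact (integral_mono_ae (integrable_toReal_min hZmeas.aemeasurable hM.le hnegZB) hVi hZV).trans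
    hVq

end EssSup

/-- **Essential supremum and the upwards lattice property.** For a nonempty family
`(X l)_{l : Λ}` of extended-real random variables with integrable negative parts enjoying
the `(ε,M)`-upwards lattice property for all `ε, M ∈ (0,∞)`, one has
`E[esssup X | G] = esssup E[X | G]` a.s. (for any versions of the essential suprema and of
the conditional expectations involved). -/
theorem stmt_14 {Λ : Type*} [Nonempty Λ] {m : MeasurableSpace Ω}
    (P : @Measure Ω m) [IsProbabilityMeasure P]
    (G : MeasurableSpace Ω) (hG : G ≤ m)
    (X : Λ → Ω → EReal) (hX : ∀ l, Measurable[m] (X l))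
    (hneg : ∀ l, (∫⁻ ω, eneg (X l ω) ∂P) < ⊤)
    (hlat : ∀ ε : ℝ, 0 < ε → ∀ M : ℝ, 0 < M → ∀ l l' : Λ, ∃ l'' : Λ,
      ∀ᵐ ω ∂P, ((M : EReal) ⊓ X l ω) ⊔ ((M : EReal) ⊓ X l' ω) - (ε : EReal) ≤ X l'' ω)
    (Z : Ω → EReal) (hZmeas : Measurable[m] Z) (hZ : IsEssSup P X Z)
    (Y : Ω → EReal) (hY : IsCondExp G P Z Y)
    (k : Λ → Ω → EReal) (hk : ∀ l, IsCondExp G P (X l) (k l))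
    (W : Ω → EReal) (hWmeas : Measurable[G] W) (hW : IsEssSup P k W) :
    ∀ᵐ ω ∂P, Y ω = W ω := by
  have hnegZ := hZ.lintegral_eneg_ne_top hneg
  have hWY : ∀ᵐ ω ∂P, W ω ≤ Y ω :=
    hW.2 Y fun l => (hk l).ae_le hG hY (hneg l).ne hnegZ (hZ.1 l)
  have hYW : ∀ᵐ ω ∂P, Y ω ≤ W ω := by
    refine ae_le_of_forall_eintegral_le (hY.1.mono hG le_rfl) (hWmeas.mono hG le_rfl)
      fun q q' _ => ?_
    have hBG : MeasurableSet[G] {ω | W ω < (q : ℝ) ∧ ((q' : ℝ) : EReal) < Y ω} :=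
      (measurableSet_lt hWmeas measurable_const).inter (measurableSet_lt measurable_const hY.1)
    rw [hY.eintegral_restrict_eq hG hnegZ hBG]
    exact hZ.eintegral_restrict_le hG hX hneg hlat hZmeas hk hW.1 hBG fun ω hω => hω.1
  filter_upwards [hWY, hYW] with ω h₁ h₂ using le_antisymm h₂ h₁
end
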